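/- Let L = h²∂² + 2u with u ∈ R and let M ∈ Ψ(R) be arbitrary. In Ψ(R)[ε] set L̃ := L − ε [L, M]₊ and L_G := L + ε [L, M]₋. Then L̃ and L_G each admit a unique square root whose ε⁰-part is L^{1/2}; these square roots are related by L_G^{1/2} = L̃^{1/2} + ε [ L^{1/2}, M ], and for every n ≥ 0 (taking (2n+1)-st powers of these square roots) one has L_G^{n+1/2} = L̃^{n+1/2} + ε [ L^{n+1/2}, M ]; in particular ( L_G^{n+1/2} )₋ = ( L̃^{n+1/2} + ε [ L^{n+1/2}, M ] )₋. -/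

import Mathlib

open scoped BigOperators

/-- Generalized binomial coefficient `C(k,l) = k(k-1)⋯(k-l+1)/l!` for `k : ℤ`. -/
def gbinom (k : ℤ) (l : ℕ) : ℚ :=
  (∏ i ∈ Finset.range l, ((k : ℚ) - i)) / (Nat.factorial l)

/-- Pseudo-differential operators (and symbols): coefficient functions `ℤ → R`
with support bounded above.  The parameter `d` (the derivation) determines the product. -/
structure PDO (R : Type) [CommRing R] [Algebra ℚ R] (d : R →+ R) where
  coeff : ℤ → R
  bdd : ∃ N : ℤ, ∀ n : ℤ, N < n → coeff n = 0

namespace PDO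

variable {R : Type} [CommRing R] [Algebra ℚ R] {d : R →+ R}

theorem ext' {A B : PDO R d} (h : A.coeff = B.coeff) : A = B := by
  cases A; cases B; cases h; rfl

set_option linter.unusedSectionVars false in
theorem iterD_zero (d : R →+ R) (j : ℕ) : d^[j] (0 : R) = 0 := by
  induction j with
  | zero => rfl
  | succ j ih => rw [Function.iterate_succ_apply', ih, map_zero]

instance : Zero (PDO R d) := ⟨⟨fun _ => 0, ⟨0, fun _ _ => rfl⟩⟩⟩

instance : One (PDO R d) :=
  ⟨⟨fun n => if n = 0 then 1 else 0, ⟨0, fun n hn => if_neg (by omega)⟩⟩⟩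

instance : Add (PDO R d) :=
  ⟨fun A B => ⟨fun n => A.coeff n + B.coeff n, by
    obtain ⟨N, hN⟩ := A.bdd
    obtain ⟨M, hM⟩ := B.bdd
    exact ⟨max N M, fun n hn => by
      show A.coeff n + B.coeff n = 0
      rw [hN n (lt_of_le_of_lt (le_max_left N M) hn),
        hM n (lt_of_le_of_lt (le_max_right N M) hn), add_zero]⟩⟩⟩

instance : Neg (PDO R d) :=
  ⟨fun A => ⟨fun n => -A.coeff n, by
    obtain ⟨N, hN⟩ := A.bdd
    exact ⟨N, fun n hn => by show -A.coeff n = 0; rw [hN n hn, neg_zero]⟩⟩⟩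

instance : SMul ℚ (PDO R d) :=
  ⟨fun c A => ⟨fun n => c • A.coeff n, by
    obtain ⟨N, hN⟩ := A.bdd
    exact ⟨N, fun n hn => by show c • A.coeff n = 0; rw [hN n hn, smul_zero]⟩⟩⟩

instance : AddCommGroup (PDO R d) where
  add := (· + ·)
  zero := 0
  neg := Neg.neg
  add_assoc A B C := ext' (funext fun n => add_assoc (A.coeff n) (B.coeff n) (C.coeff n))
  zero_add A := ext' (funext fun n => zero_add (A.coeff n))
  add_zero A := ext' (funext fun n => add_zero (A.coeff n))
  add_comm A B := ext' (funext fun n => add_comm (A.coeff n) (B.coeff n))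
  neg_add_cancel A := ext' (funext fun n => neg_add_cancel (A.coeff n))
  nsmul := nsmulRec
  zsmul := zsmulRec

/-- The product of pseudo-differential operators, determined by the commutation rule
`∂^k · f = Σ_{l ≥ 0} C(k,l) (∂^l f) ∂^(k-l)`. -/
noncomputable instance : Mul (PDO R d) :=
  ⟨fun A B =>
    ⟨fun n => ∑ᶠ (k : ℤ) (m : ℤ),
        if _ : 0 ≤ k + m - n then
          A.coeff k * (gbinom k (k + m - n).toNat • (d^[(k + m - n).toNat] (B.coeff m)))
        else 0, by
      obtain ⟨N, hN⟩ := A.bdd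
      obtain ⟨M, hM⟩ := B.bdd
      refine ⟨N + M, fun n hn => ?_⟩
      have hz : ∀ k m : ℤ,
          (if _ : 0 ≤ k + m - n then
            A.coeff k * (gbinom k (k + m - n).toNat • (d^[(k + m - n).toNat] (B.coeff m)))
          else 0) = 0 := by
        intro k m
        by_cases hl : 0 ≤ k + m - n
        · rw [dif_pos hl]
          by_cases hk : N < k
          · rw [hN k hk, zero_mul]
          · rw [hM m (by omega), iterD_zero, smul_zero, mul_zero]
        · rw [dif_neg hl]
      simp only [hz, finsum_zero]⟩⟩

noncomputable def npow (A : PDO R d) : ℕ → PDO R d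
  | 0 => 1
  | n + 1 => npow A n * A

noncomputable instance : Pow (PDO R d) ℕ := ⟨fun A n => A.npow n⟩

/-- The monomial `r ∂^k`. -/
def mono (r : R) (k : ℤ) : PDO R d :=
  ⟨fun n => if n = k then r else 0, ⟨k, fun n hn => if_neg (by omega)⟩⟩

/-- The constant (order-zero) operator `r`. -/
def const (r : R) : PDO R d := mono r 0

/-- The operator `∂`. -/
def del : PDO R d := mono (1 : R) 1

/-- The operator `h∂`. -/
def hdel (h : Rˣ) : PDO R d := mono (h : R) 1

/-- The Lax operator `L = h²∂² + 2u`. -/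
def Lop (h : Rˣ) (u : R) : PDO R d :=
  ⟨fun n => if n = 2 then (h : R) ^ 2 else if n = 0 then 2 * u else 0,
   ⟨2, fun n hn => by
      show (if n = 2 then (h : R) ^ 2 else if n = 0 then 2 * u else 0) = 0
      rw [if_neg (by omega), if_neg (by omega)]⟩⟩

/-- The differential part `A₊`. -/
def pos (A : PDO R d) : PDO R d :=
  ⟨fun n => if 0 ≤ n then A.coeff n else 0, by
    obtain ⟨N, hN⟩ := A.bdd
    refine ⟨N, fun n hn => ?_⟩
    show (if 0 ≤ n then A.coeff n else 0) = 0
    by_cases h0 : (0 : ℤ) ≤ n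
    · rw [if_pos h0]; exact hN n hn
    · rw [if_neg h0]⟩

/-- The integral part `A₋ = A − A₊`. -/
def negp (A : PDO R d) : PDO R d :=
  ⟨fun n => if n < 0 then A.coeff n else 0, ⟨0, fun n hn => if_neg (by omega)⟩⟩

/-- The residue `Res_∂ A = a₋₁`. -/
def res (A : PDO R d) : R := A.coeff (-1)

/-- The formal adjoint, determined by `(f ∂^k)* = (−∂)^k · f`. -/
noncomputable def adj (A : PDO R d) : PDO R d :=
  ⟨fun n => ∑ᶠ k : ℤ,
      if _ : 0 ≤ k - n then
        (((-1 : ℚ) ^ k) * gbinom k (k - n).toNat) • (d^[(k - n).toNat] (A.coeff k))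
      else 0, by
    obtain ⟨N, hN⟩ := A.bdd
    refine ⟨N, fun n hn => ?_⟩
    have hz : ∀ k : ℤ, (if _ : 0 ≤ k - n then
        (((-1 : ℚ) ^ k) * gbinom k (k - n).toNat) • (d^[(k - n).toNat] (A.coeff k))
      else 0) = 0 := by
      intro k
      by_cases hl : 0 ≤ k - n
      · rw [dif_pos hl, hN k (by omega), iterD_zero, smul_zero]
      · rw [dif_neg hl]
    simp only [hz, finsum_zero]⟩

/-- The operator `P(h∂) = Σ pₙ hⁿ ∂ⁿ` associated to the symbol `P(λ) = Σ pₙ λⁿ`. -/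
noncomputable def ofSymbol (h : Rˣ) (A : PDO R d) : PDO R d :=
  ⟨fun n => A.coeff n * ((h ^ n : Rˣ) : R), by
    obtain ⟨N, hN⟩ := A.bdd
    exact ⟨N, fun n hn => by show A.coeff n * ((h ^ n : Rˣ) : R) = 0; rw [hN n hn, zero_mul]⟩⟩

/-- Apply `d^[i]` to each coefficient. -/
def mapD (i : ℕ) (A : PDO R d) : PDO R d :=
  ⟨fun n => d^[i] (A.coeff n), by
    obtain ⟨N, hN⟩ := A.bdd
    exact ⟨N, fun n hn => by show d^[i] (A.coeff n) = 0; rw [hN n hn, iterD_zero]⟩⟩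

/-- The coefficientwise extension of an additive map `D : R →+ R`. -/
def mapHom (D : R →+ R) (A : PDO R d) : PDO R d :=
  ⟨fun n => D (A.coeff n), by
    obtain ⟨N, hN⟩ := A.bdd
    exact ⟨N, fun n hn => by show D (A.coeff n) = 0; rw [hN n hn, map_zero]⟩⟩

/-- The commutator `[A, B] = AB − BA`. -/
noncomputable def comm (A B : PDO R d) : PDO R d := A * B - B * A

end PDO

/-- The Leibniz rule: `d` is a derivation. -/
def Leibniz {R : Type} [CommRing R] [Algebra ℚ R] (d : R →+ R) : Prop :=
  ∀ a b : R, d (a * b) = a * d b + b * d a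

/-- `aₙ = 1/(2n+1)!!`. -/
def kdvA (n : ℕ) : ℚ := 1 / (Nat.doubleFactorial (2 * n + 1))

/-- `bₙ = (2n−1)!!` (with `b₀ = (−1)!! = 1`). -/
def kdvB (n : ℕ) : ℚ := (Nat.doubleFactorial (2 * n - 1) : ℕ)

/-- Pseudo-differential operators with coefficients in the dual numbers
`R[ε]/(ε²)`: `⟨A, B⟩` represents `A + εB`. -/
structure EPDO (R : Type) [CommRing R] [Algebra ℚ R] (d : R →+ R) where
  re : PDO R d
  im : PDO R d

namespace EPDO

variable {R : Type} [CommRing R] [Algebra ℚ R] {d : R →+ R}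

instance : Add (EPDO R d) := ⟨fun A B => ⟨A.re + B.re, A.im + B.im⟩⟩
instance : Neg (EPDO R d) := ⟨fun A => ⟨-A.re, -A.im⟩⟩
instance : Sub (EPDO R d) := ⟨fun A B => ⟨A.re - B.re, A.im - B.im⟩⟩
instance : Zero (EPDO R d) := ⟨⟨0, 0⟩⟩
instance : One (EPDO R d) := ⟨⟨1, 0⟩⟩

/-- Multiplication in the dual numbers: `(A + εB)(C + εD) = AC + ε(AD + BC)`. -/
noncomputable instance : Mul (EPDO R d) :=
  ⟨fun A B => ⟨A.re * B.re, A.re * B.im + A.im * B.re⟩⟩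

instance : SMul ℚ (EPDO R d) := ⟨fun c A => ⟨c • A.re, c • A.im⟩⟩

noncomputable def epow (A : EPDO R d) : ℕ → EPDO R d
  | 0 => 1
  | n + 1 => epow A n * A

noncomputable instance : Pow (EPDO R d) ℕ := ⟨fun A n => A.epow n⟩

/-- The inclusion `Ψ(R) → Ψ(R)[ε]`. -/
def lift (A : PDO R d) : EPDO R d := ⟨A, 0⟩

/-- The square-zero formal parameter `ε`. -/
def eps : EPDO R d := ⟨0, 1⟩

/-- The adjoint, extended `ε`-linearly. -/
noncomputable def eadj (A : EPDO R d) : EPDO R d := ⟨PDO.adj A.re, PDO.adj A.im⟩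

/-- The differential part, extended `ε`-linearly. -/
def epos (A : EPDO R d) : EPDO R d := ⟨PDO.pos A.re, PDO.pos A.im⟩

/-- The integral part, extended `ε`-linearly. -/
def enegp (A : EPDO R d) : EPDO R d := ⟨PDO.negp A.re, PDO.negp A.im⟩

/-- The commutator in `Ψ(R)[ε]`. -/
noncomputable def ecomm (A B : EPDO R d) : EPDO R d := A * B - B * A

/-- The residue, with values in the dual numbers `R[ε]` (as a pair). -/
def eres (A : EPDO R d) : R × R := (PDO.res A.re, PDO.res A.im)

end EPDO

/-!
A square root of `L + εZ` with `ε⁰`-part `W = L^(1/2)` has the form `W + εX` with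
`W X + X W = Z`. Since `W` has order one and unit leading coefficient `h`, the anticommutator
`X ↦ W X + X W` raises the order by exactly one and multiplies the top coefficient by `2h`; so it
is injective, and it is surjective by killing the top coefficient of the residual one order at
a time. As `W [W, M] + [W, M] W = [W², M] = [L, M]₊ + [L, M]₋`, the square roots of `L_G` and `L̃`
differ by `ε [W, M]`, that is `L_G^(1/2) = (1 - εM) L̃^(1/2) (1 + εM)`, and this conjugation
commutes with taking powers.

The product is associative because, coefficientwise, `(A B) C` and `A (B C)` expand to the same
finite sum, by the Leibniz rule and the Vandermonde identity for the generalized binomial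
coefficients.
-/

open Finset

section GeneralizedBinomial

lemma gbinom_eq_choose (k : ℤ) (l : ℕ) : gbinom k l = Ring.choose (k : ℚ) l := by
  rw [Ring.choose_eq_smul, gbinom, ← Polynomial.aeval_eq_smeval,
    ← Polynomial.eval_map_algebraMap, descPochhammer_map, descPochhammer_eval_eq_prod_range,
    smul_eq_mul, div_eq_inv_mul]

@[simp] lemma gbinom_zero_right (k : ℤ) : gbinom k 0 = 1 := by simp [gbinom]

lemma gbinom_zero_left {l : ℕ} (hl : l ≠ 0) : gbinom 0 l = 0 := by
  simp [gbinom_eq_choose, Ring.choose_zero_pos ℚ (Nat.pos_of_ne_zero hl)]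

lemma gbinom_add_mul_choose (k : ℤ) (a c : ℕ) :
    gbinom k (a + c) * ((a + c).choose a : ℚ) = gbinom k a * gbinom (k - a) c := by
  have h := Ring.choose_smul_choose (k : ℚ) (Nat.le_add_right a c)
  rw [nsmul_eq_mul, Nat.add_sub_cancel_left] at h
  rw [gbinom_eq_choose, gbinom_eq_choose, gbinom_eq_choose, mul_comm, h]
  push_cast; rfl

lemma gbinom_add (x y : ℤ) (b : ℕ) :
    gbinom (x + y) b = ∑ j ∈ range (b + 1), gbinom x (b - j) * gbinom y j := by
  have h := Ring.add_choose_eq (R := ℚ) (r := (y : ℚ)) (s := (x : ℚ)) b (Commute.all _ _)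
  rw [Nat.sum_antidiagonal_eq_sum_range_succ_mk] at h
  simp only [gbinom_eq_choose]
  push_cast
  rw [add_comm (x : ℚ), h]
  exact sum_congr rfl fun j _ => mul_comm _ _

lemma sum_gbinom_mul_choose_mul_gbinom (k p : ℤ) (α β : ℕ) {Λ : ℕ} (hΛ : β < Λ) :
    ∑ j ∈ range Λ, (if j ≤ β then
      gbinom k (α + β - j) * ((α + β - j).choose α : ℚ) * gbinom p j else 0)
      = gbinom k α * gbinom (k + p - α) β := by
  rw [← sum_subset (range_subset_range.2 hΛ)
    fun j _ hj => if_neg (by simp only [mem_range] at hj; omega),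
    show k + p - α = (k - α) + p by ring, gbinom_add, mul_sum]
  refine sum_congr rfl fun j hj => ?_
  rw [mem_range] at hj
  rw [if_pos (by omega), show α + β - j = α + (β - j) by omega, gbinom_add_mul_choose, mul_assoc]

end GeneralizedBinomial

section IteratedDerivation

lemma iterate_map_rat_smul {M : Type*} [AddCommGroup M] [Module ℚ M] (f : M →+ M) (n : ℕ)
    (c : ℚ) (x : M) : f^[n] (c • x) = c • f^[n] x :=
  map_rat_smul ((show AddMonoid.End M from f) ^ n) c x

lemma iterate_map_sum {M : Type*} [AddCommMonoid M] (f : M →+ M) (n : ℕ) {ι : Type*}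
    (s : Finset ι) (g : ι → M) : f^[n] (∑ i ∈ s, g i) = ∑ i ∈ s, f^[n] (g i) :=
  map_sum ((show AddMonoid.End M from f) ^ n) g s

variable {R : Type} [CommRing R] [Algebra ℚ R] {d : R →+ R}

lemma Leibniz.map_one (hd : Leibniz d) : d 1 = 0 := by
  simpa using hd 1 1

lemma Leibniz.iterate_map_mul (hd : Leibniz d) (n : ℕ) (x y : R) :
    d^[n] (x * y) = ∑ i ∈ range (n + 1), n.choose i • (d^[i] x * d^[n - i] y) := by
  induction n with
  | zero => simp
  | succ n ih =>
    rw [sum_choose_succ_nsmul (fun i j => d^[i] x * d^[j] y) n, Function.iterate_succ_apply', ih,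
      map_sum, ← sum_add_distrib]
    refine sum_congr rfl fun i hi => ?_
    rw [map_nsmul, hd, ← smul_add, Nat.sub_add_comm (Nat.lt_succ_iff.1 (mem_range.1 hi)),
      Function.iterate_succ_apply', Function.iterate_succ_apply', mul_comm (d^[n - i] y),
      add_comm]

end IteratedDerivation

lemma isUnit_two_mul {R : Type*} [Semiring R] [Algebra ℚ R] {w : R} (hw : IsUnit w) :
    IsUnit (2 * w) := by
  refine IsUnit.mul ?_ hw
  simpa only [map_ofNat] using (IsUnit.mk0 (2 : ℚ) two_ne_zero).map (algebraMap ℚ R)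

namespace PDO

variable {R : Type} [CommRing R] [Algebra ℚ R] {d : R →+ R}

@[ext] lemma ext {A B : PDO R d} (h : ∀ n, A.coeff n = B.coeff n) : A = B := ext' (funext h)

@[simp] lemma coeff_zero (n : ℤ) : (0 : PDO R d).coeff n = 0 := rfl

@[simp] lemma coeff_add (A B : PDO R d) (n : ℤ) : (A + B).coeff n = A.coeff n + B.coeff n := rfl

@[simp] lemma coeff_sub (A B : PDO R d) (n : ℤ) : (A - B).coeff n = A.coeff n - B.coeff n := by
  rw [sub_eq_add_neg, sub_eq_add_neg]; rfl

lemma coeff_one (n : ℤ) : (1 : PDO R d).coeff n = if n = 0 then 1 else 0 := rfl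

lemma coeff_mono_self (r : R) (m : ℤ) : (mono r m : PDO R d).coeff m = r := if_pos rfl

lemma pos_add_negp (A : PDO R d) : pos A + negp A = A := by
  ext n
  change (if 0 ≤ n then A.coeff n else 0) + (if n < 0 then A.coeff n else 0) = A.coeff n
  split_ifs <;> first | omega | simp

section Order

def OrderLE (A : PDO R d) (N : ℤ) : Prop := ∀ n, N < n → A.coeff n = 0

variable {A A' : PDO R d} {N N' : ℤ}

lemma exists_orderLE (A : PDO R d) : ∃ N, A.OrderLE N := A.bdd

lemma mono_orderLE (r : R) (m : ℤ) : (mono r m : PDO R d).OrderLE m :=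
  fun _ hn => if_neg (by omega)

lemma OrderLE.le_of_coeff_ne_zero (hA : A.OrderLE N) {n : ℤ} (h : A.coeff n ≠ 0) : n ≤ N :=
  not_lt.1 fun hn => h (hA n hn)

lemma OrderLE.mono (hA : A.OrderLE N) (hN : N ≤ N') : A.OrderLE N' :=
  fun n hn => hA n (hN.trans_lt hn)

lemma OrderLE.pred (hA : A.OrderLE N) (h : A.coeff N = 0) : A.OrderLE (N - 1) := fun n hn => by
  rcases eq_or_lt_of_le (show N ≤ n by omega) with rfl | hn'
  · exact h
  · exact hA n hn'

lemma OrderLE.add (hA : A.OrderLE N) (hA' : A'.OrderLE N) : (A + A').OrderLE N :=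
  fun n hn => by rw [coeff_add, hA n hn, hA' n hn, add_zero]

lemma OrderLE.sub (hA : A.OrderLE N) (hA' : A'.OrderLE N) : (A - A').OrderLE N :=
  fun n hn => by rw [coeff_sub, hA n hn, hA' n hn, sub_zero]

lemma eq_zero_of_forall_orderLE (h : ∀ t : ℕ, A.OrderLE (N - t)) : A = 0 := by
  ext j
  exact h (N - j + 1).toNat j (by omega)

end Order

section Product

/-- The `(k, l)` term of `(A * B).coeff n`: `A_k ∂^k` acting on `B_m ∂^m`, `m = n - k + l`,
contributes `C(k,l) A_k ∂^l(B_m)` to `∂^n`. -/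
noncomputable def mulTerm (A B : PDO R d) (n k : ℤ) (l : ℕ) : R :=
  A.coeff k * (gbinom k l • d^[l] (B.coeff (n - k + l)))

variable {A A' B B' : PDO R d} {a b : ℤ} {n k : ℤ} {l : ℕ}

lemma coeff_ne_zero_of_mulTerm_ne_zero (h : mulTerm A B n k l ≠ 0) :
    A.coeff k ≠ 0 ∧ B.coeff (n - k + l) ≠ 0 := by
  refine ⟨fun h0 => h ?_, fun h0 => h ?_⟩ <;> simp [mulTerm, h0]

lemma le_of_mulTerm_ne_zero (hA : A.OrderLE a) (hB : B.OrderLE b) (h : mulTerm A B n k l ≠ 0) :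
    k ≤ a ∧ n - k + l ≤ b :=
  ⟨hA.le_of_coeff_ne_zero (coeff_ne_zero_of_mulTerm_ne_zero h).1,
    hB.le_of_coeff_ne_zero (coeff_ne_zero_of_mulTerm_ne_zero h).2⟩

lemma mulTerm_add_left : mulTerm (A + A') B n k l = mulTerm A B n k l + mulTerm A' B n k l :=
  add_mul _ _ _

lemma mulTerm_add_right : mulTerm A (B + B') n k l = mulTerm A B n k l + mulTerm A B' n k l := by
  simp only [mulTerm, coeff_add, iterate_map_add, smul_add, mul_add]

lemma coeff_mul_eq_sum (A B : PDO R d) (n : ℤ) {K : Finset ℤ} {L : Finset ℕ}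
    (hKL : ∀ k l, mulTerm A B n k l ≠ 0 → k ∈ K ∧ l ∈ L) :
    (A * B).coeff n = ∑ k ∈ K, ∑ l ∈ L, mulTerm A B n k l := by
  have hterm : ∀ k m : ℤ, (if _ : 0 ≤ k + m - n then
      A.coeff k * (gbinom k (k + m - n).toNat • d^[(k + m - n).toNat] (B.coeff m)) else 0)
      = if 0 ≤ k + m - n then mulTerm A B n k (k + m - n).toNat else 0 := by
    intro k m
    split_ifs with hc
    · rw [mulTerm, show n - k + ((k + m - n).toNat : ℤ) = m by omega]
    · rfl
  have hinner : ∀ k : ℤ, (∑ᶠ m : ℤ, if 0 ≤ k + m - n then mulTerm A B n k (k + m - n).toNat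
      else 0) = ∑ l ∈ L, mulTerm A B n k l := by
    intro k
    have hsupp : (Function.support fun m : ℤ =>
        if 0 ≤ k + m - n then mulTerm A B n k (k + m - n).toNat else 0)
        ⊆ ↑(L.image fun l : ℕ => n - k + l) := by
      intro m hm
      rw [Function.mem_support] at hm
      split_ifs at hm with hc
      · simp only [coe_image, Set.mem_image, mem_coe]
        exact ⟨(k + m - n).toNat, (hKL _ _ hm).2, by omega⟩
      · exact absurd rfl hm
    rw [finsum_eq_finsetSum_of_support_subset _ hsupp,
      sum_image fun a _ b _ hab => by simpa using hab]
    refine sum_congr rfl fun l _ => ?_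
    rw [if_pos (by omega)]
    congr 1
    omega
  have hsupp : (Function.support fun k : ℤ => ∑ l ∈ L, mulTerm A B n k l) ⊆ ↑K := by
    intro k hk
    obtain ⟨l, -, hl⟩ := exists_ne_zero_of_sum_ne_zero hk
    exact (hKL k l hl).1
  change (∑ᶠ (k : ℤ) (m : ℤ), _) = _
  simp only [hterm, hinner]
  exact finsum_eq_finsetSum_of_support_subset _ hsupp

lemma coeff_mul_eq_sum_Icc_range (hA : A.OrderLE a) (hB : B.OrderLE b) {lo : ℤ} {Λ : ℕ}
    (hlo : lo ≤ n - b) (hΛ : a + b - n < Λ) :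
    (A * B).coeff n = ∑ k ∈ Icc lo a, ∑ l ∈ range Λ, mulTerm A B n k l := by
  refine coeff_mul_eq_sum A B n fun k l hne => ?_
  have := le_of_mulTerm_ne_zero hA hB hne
  rw [mem_Icc, mem_range]
  omega

lemma OrderLE.mul (hA : A.OrderLE a) (hB : B.OrderLE b) : (A * B).OrderLE (a + b) := by
  intro n hn
  rw [coeff_mul_eq_sum A B n (K := ∅) (L := ∅) fun k l hne => ?_, sum_empty]
  have := le_of_mulTerm_ne_zero hA hB hne
  omega

lemma coeff_mul_of_orderLE (hA : A.OrderLE a) (hB : B.OrderLE b) :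
    (A * B).coeff (a + b) = A.coeff a * B.coeff b := by
  rw [coeff_mul_eq_sum A B (a + b) (K := {a}) (L := {0}) fun k l hne => ?_, sum_singleton,
    sum_singleton, mulTerm, gbinom_zero_right, one_smul, Function.iterate_zero_apply,
    show a + b - a + ((0 : ℕ) : ℤ) = b by omega]
  have := le_of_mulTerm_ne_zero hA hB hne
  rw [mem_singleton, mem_singleton]
  omega

protected lemma zero_mul (B : PDO R d) : 0 * B = 0 := by
  ext n
  rw [coeff_mul_eq_sum 0 B n (K := ∅) (L := ∅) fun k l hne => ?_, sum_empty, coeff_zero]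
  exact absurd rfl (coeff_ne_zero_of_mulTerm_ne_zero hne).1

protected lemma mul_zero (A : PDO R d) : A * 0 = 0 := by
  ext n
  rw [coeff_mul_eq_sum A 0 n (K := ∅) (L := ∅) fun k l hne => ?_, sum_empty, coeff_zero]
  exact absurd rfl (coeff_ne_zero_of_mulTerm_ne_zero hne).2

protected lemma one_mul (B : PDO R d) : 1 * B = B := by
  ext n
  rw [coeff_mul_eq_sum 1 B n (K := {0}) (L := {0}) fun k l hne => ?_]
  · simp [mulTerm, coeff_one]
  have hk : k = 0 := by
    by_contra hk
    exact (coeff_ne_zero_of_mulTerm_ne_zero hne).1 (by rw [coeff_one, if_neg hk])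
  subst hk
  refine ⟨mem_singleton_self 0, mem_singleton.2 ?_⟩
  by_contra hl
  exact hne (by rw [mulTerm, gbinom_zero_left hl, zero_smul, mul_zero])

protected lemma mul_one (hd : Leibniz d) (A : PDO R d) : A * 1 = A := by
  ext n
  rw [coeff_mul_eq_sum A 1 n (K := {n}) (L := {0}) fun k l hne => ?_]
  · simp [mulTerm, coeff_one]
  have hkl : n - k + l = 0 := by
    by_contra h
    exact (coeff_ne_zero_of_mulTerm_ne_zero hne).2 (by rw [coeff_one, if_neg h])
  obtain rfl | hl := eq_or_ne l 0
  · simp only [mem_singleton, and_true]; omega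
  · refine absurd ?_ hne
    rw [mulTerm, hkl, coeff_one, if_pos rfl, ← Nat.succ_pred_eq_of_ne_zero hl,
      Function.iterate_succ_apply, hd.map_one, iterate_map_zero, smul_zero, mul_zero]

protected lemma add_mul (A A' B : PDO R d) : (A + A') * B = A * B + A' * B := by
  obtain ⟨a, hA⟩ := A.exists_orderLE
  obtain ⟨a', hA'⟩ := A'.exists_orderLE
  obtain ⟨b, hB⟩ := B.exists_orderLE
  replace hA := hA.mono (le_max_left a a')
  replace hA' := hA'.mono (le_max_right a a')
  ext n
  have hΛ : max a a' + b - n < (max a a' + b - n).toNat + 1 := by omega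
  rw [coeff_add, coeff_mul_eq_sum_Icc_range (hA.add hA') hB le_rfl hΛ,
    coeff_mul_eq_sum_Icc_range hA hB le_rfl hΛ, coeff_mul_eq_sum_Icc_range hA' hB le_rfl hΛ]
  simp only [mulTerm_add_left, sum_add_distrib]

protected lemma mul_add (A B B' : PDO R d) : A * (B + B') = A * B + A * B' := by
  obtain ⟨a, hA⟩ := A.exists_orderLE
  obtain ⟨b, hB⟩ := B.exists_orderLE
  obtain ⟨b', hB'⟩ := B'.exists_orderLE
  replace hB := hB.mono (le_max_left b b')
  replace hB' := hB'.mono (le_max_right b b')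
  ext n
  have hΛ : a + max b b' - n < (a + max b b' - n).toNat + 1 := by omega
  rw [coeff_add, coeff_mul_eq_sum_Icc_range hA (hB.add hB') le_rfl hΛ,
    coeff_mul_eq_sum_Icc_range hA hB le_rfl hΛ, coeff_mul_eq_sum_Icc_range hA hB' le_rfl hΛ]
  simp only [mulTerm_add_right, sum_add_distrib]

end Product

section Associativity

variable (A B C : PDO R d) (n : ℤ)

/-- The term of `((A * B) * C).coeff n` in which `A_k ∂^k` passes `α` derivatives to `B` and
the resulting `∂^s` passes `β` derivatives to `C`. -/
noncomputable def assocTermLeft (s : ℤ) (β : ℕ) (k : ℤ) (α : ℕ) : R :=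
  (gbinom k α * gbinom s β) •
    (A.coeff k * (d^[α] (B.coeff (s - k + α)) * d^[β] (C.coeff (n - s + β))))

/-- The term of `(A * (B * C)).coeff n` in which `A_k ∂^k` passes `l` derivatives to `B_p ∂^p C`,
`α` of which land on `B_p`, and `∂^p` passes `j` derivatives to `C`. -/
noncomputable def assocTermRight (k : ℤ) (l : ℕ) (p : ℤ) (j α : ℕ) : R :=
  ((gbinom k l * gbinom p j) * (l.choose α : ℚ)) •
    (A.coeff k * (d^[α] (B.coeff p) * d^[(l - α) + j] (C.coeff (n - k + l - p + j))))

/-- `assocTermLeft` reindexed by the index `p = s - k + α` of `B`. -/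
noncomputable def assocTerm (k p : ℤ) (α β : ℕ) : R :=
  (gbinom k α * gbinom (k + p - α) β) •
    (A.coeff k * (d^[α] (B.coeff p) * d^[β] (C.coeff (n - k - p + α + β))))

/-- `assocTermRight` reindexed by the total number `β = l - α + j` of derivatives landing on `C`;
summed over `j`, it gives `assocTerm` by `sum_gbinom_mul_choose_mul_gbinom`. -/
noncomputable def assocTermSplit (k p : ℤ) (α β j : ℕ) : R :=
  (if j ≤ β then gbinom k (α + β - j) * ((α + β - j).choose α : ℚ) * gbinom p j else 0) •
    (A.coeff k * (d^[α] (B.coeff p) * d^[β] (C.coeff (n - k - p + α + β))))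

variable {A B C n} {a b c : ℤ} {Λ : ℕ}

lemma le_of_assocTermLeft_ne_zero (hA : A.OrderLE a) (hB : B.OrderLE b) (hC : C.OrderLE c)
    {s k : ℤ} {β α : ℕ} (h : assocTermLeft A B C n s β k α ≠ 0) :
    k ≤ a ∧ s - k + α ≤ b ∧ n - s + β ≤ c := by
  refine ⟨hA.le_of_coeff_ne_zero fun h0 => h ?_, hB.le_of_coeff_ne_zero fun h0 => h ?_,
    hC.le_of_coeff_ne_zero fun h0 => h ?_⟩ <;> simp [assocTermLeft, h0]

lemma le_of_assocTermRight_ne_zero (hA : A.OrderLE a) (hB : B.OrderLE b) (hC : C.OrderLE c)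
    {k p : ℤ} {l j α : ℕ} (h : assocTermRight A B C n k l p j α ≠ 0) :
    k ≤ a ∧ p ≤ b ∧ n - k + l - p + j ≤ c ∧ α ≤ l := by
  refine ⟨hA.le_of_coeff_ne_zero fun h0 => h ?_, hB.le_of_coeff_ne_zero fun h0 => h ?_,
    hC.le_of_coeff_ne_zero fun h0 => h ?_, not_lt.1 fun hl => h ?_⟩
  all_goals first
    | simp [assocTermRight, Nat.choose_eq_zero_of_lt hl]
    | simp [assocTermRight, *]

lemma le_of_assocTerm_ne_zero (hA : A.OrderLE a) (hB : B.OrderLE b) (hC : C.OrderLE c)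
    {k p : ℤ} {α β : ℕ} (h : assocTerm A B C n k p α β ≠ 0) :
    k ≤ a ∧ p ≤ b ∧ n - k - p + α + β ≤ c := by
  refine ⟨hA.le_of_coeff_ne_zero fun h0 => h ?_, hB.le_of_coeff_ne_zero fun h0 => h ?_,
    hC.le_of_coeff_ne_zero fun h0 => h ?_⟩ <;> simp [assocTerm, h0]

lemma le_of_assocTermSplit_ne_zero (hA : A.OrderLE a) (hB : B.OrderLE b) (hC : C.OrderLE c)
    {k p : ℤ} {α β j : ℕ} (h : assocTermSplit A B C n k p α β j ≠ 0) :
    k ≤ a ∧ p ≤ b ∧ n - k - p + α + β ≤ c ∧ j ≤ β := by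
  have hj : j ≤ β := not_lt.1 fun hj => h (by rw [assocTermSplit, if_neg (by omega), zero_smul])
  rw [assocTermSplit, if_pos hj] at h
  refine ⟨hA.le_of_coeff_ne_zero fun h0 => h ?_, hB.le_of_coeff_ne_zero fun h0 => h ?_,
    hC.le_of_coeff_ne_zero fun h0 => h ?_, hj⟩ <;> simp [h0]

lemma coeff_mul_mul_eq_sum_assocTermLeft (hA : A.OrderLE a) (hB : B.OrderLE b)
    (hC : C.OrderLE c) (hΛ : a + b + c - n < Λ) :
    (A * B * C).coeff n
      = ∑ x ∈ (Icc (n - c) (a + b) ×ˢ range Λ) ×ˢ (Icc (n - b - c) a ×ˢ range Λ),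
        assocTermLeft A B C n x.1.1 x.1.2 x.2.1 x.2.2 := by
  simp only [sum_product]
  rw [coeff_mul_eq_sum_Icc_range (hA.mul hB) hC (lo := n - c) (Λ := Λ) le_rfl (by omega)]
  refine sum_congr rfl fun s hs => sum_congr rfl fun β _ => ?_
  rw [mem_Icc] at hs
  rw [mulTerm, coeff_mul_eq_sum_Icc_range hA hB (lo := n - b - c) (Λ := Λ) (by omega) (by omega),
    sum_mul]
  refine sum_congr rfl fun k _ => ?_
  rw [sum_mul]
  refine sum_congr rfl fun α _ => ?_
  simp only [mulTerm, assocTermLeft, mul_smul_comm, smul_mul_assoc, smul_smul, mul_assoc]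
  rw [mul_comm (gbinom s β)]

lemma coeff_mul_mul_eq_sum_assocTermRight (hd : Leibniz d) (hA : A.OrderLE a)
    (hB : B.OrderLE b) (hC : C.OrderLE c) (hΛ : a + b + c - n < Λ) :
    (A * (B * C)).coeff n
      = ∑ x ∈ (Icc (n - b - c) a ×ˢ range Λ) ×ˢ (Icc (n - a - c) b ×ˢ (range Λ ×ˢ range Λ)),
        assocTermRight A B C n x.1.1 x.1.2 x.2.1 x.2.2.1 x.2.2.2 := by
  simp only [sum_product]
  rw [coeff_mul_eq_sum_Icc_range hA (hB.mul hC) (lo := n - b - c) (Λ := Λ) (by omega) (by omega)]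
  refine sum_congr rfl fun k hk => sum_congr rfl fun l hl => ?_
  rw [mem_Icc] at hk
  rw [mem_range] at hl
  rw [mulTerm, coeff_mul_eq_sum_Icc_range hB hC (lo := n - a - c) (Λ := Λ) (by omega) (by omega),
    iterate_map_sum, smul_sum, mul_sum]
  refine sum_congr rfl fun p _ => ?_
  rw [iterate_map_sum, smul_sum, mul_sum]
  refine sum_congr rfl fun j _ => ?_
  have hpad : ∀ f : ℕ → R, ∑ α ∈ range (l + 1), l.choose α • f α
      = ∑ α ∈ range Λ, l.choose α • f α := fun f =>
    sum_subset (range_subset_range.2 hl) fun α _ hα => by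
      rw [Nat.choose_eq_zero_of_lt (by simp only [mem_range] at hα; omega), zero_smul]
  rw [mulTerm, mul_smul_comm (x := B.coeff p), iterate_map_rat_smul, hd.iterate_map_mul, hpad,
    smul_sum, smul_sum, mul_sum]
  refine sum_congr rfl fun α _ => ?_
  rw [assocTermRight, ← Function.iterate_add_apply, ← Nat.cast_smul_eq_nsmul ℚ, smul_smul,
    smul_smul, mul_smul_comm, mul_assoc]

lemma sum_assocTermLeft_eq_sum_assocTerm (hA : A.OrderLE a) (hB : B.OrderLE b)
    (hC : C.OrderLE c) :
    ∑ x ∈ (Icc (n - c) (a + b) ×ˢ range Λ) ×ˢ (Icc (n - b - c) a ×ˢ range Λ),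
      assocTermLeft A B C n x.1.1 x.1.2 x.2.1 x.2.2
    = ∑ y ∈ (Icc (n - b - c) a ×ˢ Icc (n - a - c) b) ×ˢ (range Λ ×ˢ range Λ),
      assocTerm A B C n y.1.1 y.1.2 y.2.1 y.2.2 := by
  refine sum_bij_ne_zero (fun x _ _ => ((x.2.1, x.1.1 - x.2.1 + x.2.2), (x.2.2, x.1.2)))
    (fun x hx hne => ?_) (fun x _ _ y _ _ hxy => ?_) (fun y hy hne => ?_) (fun x _ _ => ?_)
  · have := le_of_assocTermLeft_ne_zero hA hB hC hne
    simp only [mem_product, mem_Icc, mem_range] at hx ⊢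
    omega
  · simp only [Prod.mk.injEq] at hxy
    simp only [Prod.ext_iff]
    omega
  · have := le_of_assocTerm_ne_zero hA hB hC hne
    simp only [mem_product, mem_Icc, mem_range] at hy
    have hval : assocTermLeft A B C n (y.1.1 + y.1.2 - y.2.1) y.2.2 y.1.1 y.2.1
        = assocTerm A B C n y.1.1 y.1.2 y.2.1 y.2.2 := by
      rw [assocTermLeft, assocTerm, show y.1.1 + y.1.2 - y.2.1 - y.1.1 + y.2.1 = y.1.2 by ring,
        show n - (y.1.1 + y.1.2 - y.2.1) + y.2.2 = n - y.1.1 - y.1.2 + y.2.1 + y.2.2 by ring]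
    refine ⟨((y.1.1 + y.1.2 - y.2.1, y.2.2), (y.1.1, y.2.1)), ?_, hval ▸ hne, ?_⟩
    · simp only [mem_product, mem_Icc, mem_range]
      omega
    · exact Prod.ext (Prod.ext rfl (by ring)) rfl
  · rw [assocTermLeft, assocTerm, show x.2.1 + (x.1.1 - x.2.1 + x.2.2) - x.2.2 = x.1.1 by ring,
      show n - x.2.1 - (x.1.1 - x.2.1 + x.2.2) + x.2.2 + x.1.2 = n - x.1.1 + x.1.2 by ring]

lemma sum_assocTermRight_eq_sum_assocTermSplit (hA : A.OrderLE a) (hB : B.OrderLE b)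
    (hC : C.OrderLE c) (hΛ : a + b + c - n < Λ) :
    ∑ x ∈ (Icc (n - b - c) a ×ˢ range Λ) ×ˢ (Icc (n - a - c) b ×ˢ (range Λ ×ˢ range Λ)),
      assocTermRight A B C n x.1.1 x.1.2 x.2.1 x.2.2.1 x.2.2.2
    = ∑ y ∈ ((Icc (n - b - c) a ×ˢ Icc (n - a - c) b) ×ˢ (range Λ ×ˢ range Λ)) ×ˢ range Λ,
      assocTermSplit A B C n y.1.1.1 y.1.1.2 y.1.2.1 y.1.2.2 y.2 := by
  refine sum_bij_ne_zero
    (fun x _ _ => (((x.1.1, x.2.1), (x.2.2.2, (x.1.2 - x.2.2.2) + x.2.2.1)), x.2.2.1))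
    (fun x hx hne => ?_) (fun x _ hx y _ hy hxy => ?_) (fun y hy hne => ?_) (fun x _ hne => ?_)
  · have := le_of_assocTermRight_ne_zero hA hB hC hne
    simp only [mem_product, mem_Icc, mem_range] at hx ⊢
    omega
  · have := (le_of_assocTermRight_ne_zero hA hB hC hx).2.2.2
    have := (le_of_assocTermRight_ne_zero hA hB hC hy).2.2.2
    simp only [Prod.mk.injEq] at hxy
    simp only [Prod.ext_iff]
    omega
  · obtain ⟨h1, h2, h3, hjβ⟩ := le_of_assocTermSplit_ne_zero hA hB hC hne
    simp only [mem_product, mem_Icc, mem_range] at hy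
    have hval : assocTermRight A B C n y.1.1.1 (y.1.2.1 + (y.1.2.2 - y.2)) y.1.1.2 y.2 y.1.2.1
        = assocTermSplit A B C n y.1.1.1 y.1.1.2 y.1.2.1 y.1.2.2 y.2 := by
      rw [assocTermRight, assocTermSplit, if_pos hjβ,
        show y.1.2.1 + y.1.2.2 - y.2 = y.1.2.1 + (y.1.2.2 - y.2) by omega,
        show y.1.2.1 + (y.1.2.2 - y.2) - y.1.2.1 + y.2 = y.1.2.2 by omega,
        show n - y.1.1.1 + ((y.1.2.1 + (y.1.2.2 - y.2) : ℕ) : ℤ) - y.1.1.2 + y.2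
          = n - y.1.1.1 - y.1.1.2 + y.1.2.1 + y.1.2.2 by omega, mul_right_comm]
    refine ⟨((y.1.1.1, y.1.2.1 + (y.1.2.2 - y.2)), (y.1.1.2, (y.2, y.1.2.1))), ?_, hval ▸ hne, ?_⟩
    · simp only [mem_product, mem_Icc, mem_range]
      omega
    · simp only [Prod.ext_iff, true_and, and_true]
      omega
  · have hαl := (le_of_assocTermRight_ne_zero hA hB hC hne).2.2.2
    dsimp only
    rw [assocTermRight, assocTermSplit, if_pos (by omega),
      show x.2.2.2 + (x.1.2 - x.2.2.2 + x.2.2.1) - x.2.2.1 = x.1.2 by omega,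
      show n - x.1.1 - x.2.1 + x.2.2.2 + ((x.1.2 - x.2.2.2 + x.2.2.1 : ℕ) : ℤ)
        = n - x.1.1 + x.1.2 - x.2.1 + x.2.2.1 by omega, mul_right_comm]

lemma sum_assocTermSplit_eq_sum_assocTerm {K P : Finset ℤ} :
    ∑ y ∈ ((K ×ˢ P) ×ˢ (range Λ ×ˢ range Λ)) ×ˢ range Λ,
      assocTermSplit A B C n y.1.1.1 y.1.1.2 y.1.2.1 y.1.2.2 y.2
    = ∑ z ∈ (K ×ˢ P) ×ˢ (range Λ ×ˢ range Λ), assocTerm A B C n z.1.1 z.1.2 z.2.1 z.2.2 := by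
  rw [sum_product]
  refine sum_congr rfl fun z hz => ?_
  simp only [mem_product, mem_range] at hz
  simp only [assocTermSplit, assocTerm]
  rw [← sum_smul, sum_gbinom_mul_choose_mul_gbinom _ _ _ _ hz.2.2]

end Associativity

protected lemma mul_assoc (hd : Leibniz d) (A B C : PDO R d) : A * B * C = A * (B * C) := by
  obtain ⟨a, hA⟩ := A.exists_orderLE
  obtain ⟨b, hB⟩ := B.exists_orderLE
  obtain ⟨c, hC⟩ := C.exists_orderLE
  ext n
  have hΛ : a + b + c - n < (a + b + c - n).toNat + 1 := by omega
  rw [coeff_mul_mul_eq_sum_assocTermLeft hA hB hC hΛ,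
    coeff_mul_mul_eq_sum_assocTermRight hd hA hB hC hΛ, sum_assocTermLeft_eq_sum_assocTerm hA hB hC,
    sum_assocTermRight_eq_sum_assocTermSplit hA hB hC hΛ, sum_assocTermSplit_eq_sum_assocTerm]

noncomputable instance instRing [Fact (Leibniz d)] : Ring (PDO R d) :=
  { (inferInstance : AddCommGroup (PDO R d)) with
    left_distrib := PDO.mul_add
    right_distrib := PDO.add_mul
    zero_mul := PDO.zero_mul
    mul_zero := PDO.mul_zero
    mul_assoc := PDO.mul_assoc Fact.out
    one_mul := PDO.one_mul
    mul_one := PDO.mul_one Fact.out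
    npow := fun n A => A ^ n
    npow_zero := fun _ => rfl
    npow_succ := fun _ _ => rfl }

lemma comm_pow_succ [Fact (Leibniz d)] (W M : PDO R d) (m : ℕ) :
    comm (W ^ (m + 1)) M = W ^ m * comm W M + comm (W ^ m) M * W := by
  simp only [comm, pow_succ, mul_sub, sub_mul, mul_assoc]
  abel

section Anticommutator

noncomputable def anticomm (W : PDO R d) : PDO R d →+ PDO R d where
  toFun X := W * X + X * W
  map_zero' := by rw [PDO.mul_zero, PDO.zero_mul, add_zero]
  map_add' X Y := by rw [PDO.mul_add, PDO.add_mul]; abel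

variable {W X P : PDO R d} {k m N : ℤ}

lemma anticomm_apply (W X : PDO R d) : anticomm W X = W * X + X * W := rfl

lemma anticomm_comm [Fact (Leibniz d)] (W M : PDO R d) :
    anticomm W (comm W M) = comm (W * W) M := by
  simp only [anticomm_apply, comm, mul_sub, sub_mul, mul_assoc]
  abel

lemma OrderLE.anticomm (hW : W.OrderLE k) (hX : X.OrderLE m) :
    (anticomm W X).OrderLE (k + m) :=
  (hW.mul hX).add (add_comm m k ▸ hX.mul hW)

lemma coeff_anticomm_of_orderLE (hW : W.OrderLE k) (hX : X.OrderLE m) :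
    (anticomm W X).coeff (k + m) = 2 * W.coeff k * X.coeff m := by
  rw [anticomm_apply, coeff_add, coeff_mul_of_orderLE hW hX, add_comm k m,
    coeff_mul_of_orderLE hX hW]
  ring

lemma eq_zero_of_anticomm_eq_zero (hW : W.OrderLE k) (hw : IsUnit (W.coeff k))
    (hX : anticomm W X = 0) : X = 0 := by
  obtain ⟨N, hN⟩ := X.exists_orderLE
  refine eq_zero_of_forall_orderLE (N := N) fun t => ?_
  induction t with
  | zero => simpa using hN
  | succ t ih =>
    have hc := coeff_anticomm_of_orderLE hW ih
    rw [hX, coeff_zero, eq_comm, (isUnit_two_mul hw).mul_right_eq_zero] at hc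
    simpa [sub_sub] using ih.pred hc

lemma anticomm_injective (hW : W.OrderLE k) (hw : IsUnit (W.coeff k)) :
    Function.Injective (anticomm W) :=
  (injective_iff_map_eq_zero _).2 fun _ => eq_zero_of_anticomm_eq_zero hW hw

/-- Successive approximations to a solution of `anticomm W X = P`, for `P` of order `≤ N`,
`W` of order `≤ k` and `c = (2 W_k)⁻¹`: step `t` kills the coefficient of `∂^(N - t)` in the
residual `P - anticomm W X`. -/
noncomputable def anticommApprox (W P : PDO R d) (k N : ℤ) (c : R) : ℕ → PDO R d
  | 0 => 0
  | t + 1 => anticommApprox W P k N c t +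
      mono (c * (P - anticomm W (anticommApprox W P k N c t)).coeff (N - t)) (N - t - k)

lemma orderLE_sub_anticomm_anticommApprox {c : R} (hW : W.OrderLE k)
    (hc : 2 * W.coeff k * c = 1) (hP : P.OrderLE N) (t : ℕ) :
    (P - anticomm W (anticommApprox W P k N c t)).OrderLE (N - t) := by
  induction t with
  | zero => simpa [anticommApprox] using hP
  | succ t ih =>
    set r := P - anticomm W (anticommApprox W P k N c t)
    have hmono := mono_orderLE (d := d) (c * r.coeff (N - t)) (N - t - k)
    have hm := hW.anticomm hmono
    have hcoeff := coeff_anticomm_of_orderLE hW hmono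
    rw [show k + (N - t - k) = N - t by ring] at hm hcoeff
    have htop : (r - anticomm W (mono (c * r.coeff (N - t)) (N - t - k))).coeff (N - t) = 0 := by
      rw [coeff_sub, hcoeff, coeff_mono_self, ← mul_assoc, hc, one_mul, sub_self]
    simpa [anticommApprox, sub_sub, r] using (ih.sub hm).pred htop

lemma orderLE_anticommApprox_sub_anticommApprox {c : R} {t s : ℕ} (hts : t ≤ s) :
    (anticommApprox W P k N c s - anticommApprox W P k N c t).OrderLE (N - k - t) := by
  induction s, hts using Nat.le_induction with
  | base => rw [sub_self]; exact fun _ _ => rfl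
  | succ s hts ih =>
    rw [anticommApprox, add_sub_right_comm]
    exact ih.add ((mono_orderLE _ _).mono (by omega))

lemma exists_anticomm_eq (hW : W.OrderLE k) (hw : IsUnit (W.coeff k)) (P : PDO R d) :
    ∃ X, anticomm W X = P := by
  obtain ⟨N, hP⟩ := P.exists_orderLE
  obtain ⟨c, hc⟩ := (isUnit_two_mul hw).exists_right_inv
  set Xs := anticommApprox W P k N c
  have hstab : ∀ {t s : ℕ} {j : ℤ}, t ≤ s → N - k - t < j → (Xs s).coeff j = (Xs t).coeff j :=
    fun hts hj => sub_eq_zero.1 (by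
      rw [← coeff_sub]; exact orderLE_anticommApprox_sub_anticommApprox hts _ hj)
  let X : PDO R d := ⟨fun j => (Xs ((N - k - j).toNat + 1)).coeff j, N - k, fun j hj => by
    rw [hstab (Nat.zero_le _) (by omega)]; rfl⟩
  have hX : ∀ t : ℕ, (X - Xs t).OrderLE (N - k - t) := fun t j hj => by
    rw [coeff_sub, sub_eq_zero]
    change (Xs ((N - k - j).toNat + 1)).coeff j = _
    rw [← hstab (le_max_left _ t) (by omega), hstab (le_max_right _ t) hj]
  refine ⟨X, (sub_eq_zero.1 (eq_zero_of_forall_orderLE (N := N) fun t => ?_)).symm⟩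
  have := (orderLE_sub_anticomm_anticommApprox hW hc hP t).sub
    ((hW.anticomm (hX t)).mono (by omega))
  rwa [map_sub, sub_sub, add_sub_cancel] at this

end Anticommutator

end PDO

namespace EPDO

variable {R : Type} [CommRing R] [Algebra ℚ R] {d : R →+ R}

@[ext] lemma ext {S T : EPDO R d} (hre : S.re = T.re) (him : S.im = T.im) : S = T := by
  cases S; cases T; cases hre; cases him; rfl

@[simp] lemma mul_re (S T : EPDO R d) : (S * T).re = S.re * T.re := rfl
@[simp] lemma mul_im (S T : EPDO R d) : (S * T).im = S.re * T.im + S.im * T.re := rfl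

protected lemma pow_succ (S : EPDO R d) (m : ℕ) : S ^ (m + 1) = S ^ m * S := rfl

@[simp] lemma re_pow (S : EPDO R d) (m : ℕ) : (S ^ m).re = S.re ^ m := by
  induction m with
  | zero => rfl
  | succ m ih => rw [EPDO.pow_succ, mul_re, ih]; rfl

lemma eps_mul_lift (A : PDO R d) : eps * lift A = ⟨0, A⟩ :=
  EPDO.ext (PDO.zero_mul A) (by simp [eps, lift, PDO.zero_mul, PDO.one_mul])

lemma add_eps_mul_lift (S : EPDO R d) (A : PDO R d) : S + eps * lift A = ⟨S.re, S.im + A⟩ := by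
  rw [eps_mul_lift]; exact EPDO.ext (add_zero _) rfl

lemma lift_add_eps_mul_lift (A B : PDO R d) : lift A + eps * lift B = ⟨A, B⟩ := by
  rw [add_eps_mul_lift]; exact EPDO.ext rfl (zero_add _)

lemma lift_sub_eps_mul_lift (A B : PDO R d) : lift A - eps * lift B = ⟨A, -B⟩ := by
  rw [eps_mul_lift]; exact EPDO.ext (sub_zero _) (zero_sub _)

lemma anticomm_im_of_mul_self_eq {S : EPDO R d} {W L Z : PDO R d} (hS : S.re = W)
    (hSS : S * S = ⟨L, Z⟩) : PDO.anticomm W S.im = Z := by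
  rw [← hS]
  exact congrArg im hSS

lemma existsUnique_re_eq_and_mul_self_eq {W : PDO R d} {k : ℤ} (hW : W.OrderLE k)
    (hw : IsUnit (W.coeff k)) (Z : PDO R d) :
    ∃! S : EPDO R d, S.re = W ∧ S * S = ⟨W * W, Z⟩ := by
  obtain ⟨X, hX⟩ := PDO.exists_anticomm_eq hW hw Z
  refine ⟨⟨W, X⟩, ⟨rfl, EPDO.ext rfl hX⟩, fun S ⟨hS, hSS⟩ => EPDO.ext hS ?_⟩
  exact PDO.anticomm_injective hW hw ((anticomm_im_of_mul_self_eq hS hSS).trans hX.symm)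

lemma add_eps_mul_lift_comm_pow [Fact (Leibniz d)] (S : EPDO R d) (M : PDO R d) (m : ℕ) :
    (S + eps * lift (PDO.comm S.re M)) ^ m = S ^ m + eps * lift (PDO.comm (S.re ^ m) M) := by
  rw [add_eps_mul_lift, add_eps_mul_lift]
  induction m with
  | zero => exact EPDO.ext rfl (by simp [PDO.comm]; rfl)
  | succ m ih =>
    rw [EPDO.pow_succ, EPDO.pow_succ, ih]
    refine EPDO.ext rfl ?_
    simp only [mul_im, re_pow, PDO.comm_pow_succ, mul_add, add_mul]
    abel

end EPDO

theorem deformed_square_roots_relation_general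
    (R : Type) [CommRing R] [Algebra ℚ R] (d : R →+ R)
    (hd : Leibniz d) (h : Rˣ)
    (u : R) (Mop : PDO R d)
    (W : PDO R d) (hW1 : W.coeff 1 = (h : R)) (hW2 : ∀ k : ℤ, 1 < k → W.coeff k = 0)
    (hW3 : W * W = PDO.Lop h u)
    (Lt LG : EPDO R d)
    (hLt : Lt = EPDO.lift (PDO.Lop h u)
        - EPDO.eps * EPDO.lift (PDO.pos (PDO.comm (PDO.Lop h u) Mop)))
    (hLG : LG = EPDO.lift (PDO.Lop h u)
        + EPDO.eps * EPDO.lift (PDO.negp (PDO.comm (PDO.Lop h u) Mop))) :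
    (∃! S : EPDO R d, S.re = W ∧ S * S = Lt) ∧
    (∃! S : EPDO R d, S.re = W ∧ S * S = LG) ∧
    (∀ St Sg : EPDO R d, St.re = W → St * St = Lt → Sg.re = W → Sg * Sg = LG →
      Sg = St + EPDO.eps * EPDO.lift (PDO.comm W Mop) ∧
      ∀ n : ℕ,
        Sg ^ (2 * n + 1)
          = St ^ (2 * n + 1) + EPDO.eps * EPDO.lift (PDO.comm (W ^ (2 * n + 1)) Mop) ∧
        EPDO.enegp (Sg ^ (2 * n + 1))
          = EPDO.enegp (St ^ (2 * n + 1)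
              + EPDO.eps * EPDO.lift (PDO.comm (W ^ (2 * n + 1)) Mop))) := by
  have : Fact (Leibniz d) := ⟨hd⟩
  have hW : W.OrderLE 1 := hW2
  have hw : IsUnit (W.coeff 1) := hW1 ▸ h.isUnit
  set C := PDO.comm (PDO.Lop h u) Mop
  rw [← hW3, EPDO.lift_sub_eps_mul_lift] at hLt
  rw [← hW3, EPDO.lift_add_eps_mul_lift] at hLG
  subst hLt hLG
  have hCnegp : -C.pos + PDO.comm (W * W) Mop = C.negp := by
    rw [hW3, neg_add_eq_sub, sub_eq_iff_eq_add', C.pos_add_negp]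
  refine ⟨EPDO.existsUnique_re_eq_and_mul_self_eq hW hw _,
    EPDO.existsUnique_re_eq_and_mul_self_eq hW hw _, fun St Sg hSt hStt hSg hSgg => ?_⟩
  have hrel : Sg = St + EPDO.eps * EPDO.lift (PDO.comm W Mop) := by
    rw [EPDO.add_eps_mul_lift]
    refine EPDO.ext (hSg.trans hSt.symm) (PDO.anticomm_injective hW hw ?_)
    rw [EPDO.anticomm_im_of_mul_self_eq hSg hSgg, map_add,
      EPDO.anticomm_im_of_mul_self_eq hSt hStt, PDO.anticomm_comm, hCnegp]
  refine ⟨hrel, fun n => ?_⟩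
  have hpow : Sg ^ (2 * n + 1)
      = St ^ (2 * n + 1) + EPDO.eps * EPDO.lift (PDO.comm (W ^ (2 * n + 1)) Mop) := by
    rw [hrel, ← hSt]
    exact EPDO.add_eps_mul_lift_comm_pow St Mop _
  exact ⟨hpow, by rw [hpow]⟩

/-- For `L̃ := L − ε[L,M]₊` and `L_G := L + ε[L,M]₋`, each admits a unique square root with
`ε⁰`-part `L^(1/2)`; these satisfy `L_G^(1/2) = L̃^(1/2) + ε[L^(1/2), M]`, and for all `n`,
`L_G^(n+1/2) = L̃^(n+1/2) + ε[L^(n+1/2), M]`, hence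
`(L_G^(n+1/2))₋ = (L̃^(n+1/2) + ε[L^(n+1/2), M])₋`. -/
theorem deformed_square_roots_relation
    (R : Type) [CommRing R] [Algebra ℚ R] (d : R →+ R)
    (hd : Leibniz d) (h : Rˣ) (hdh : d (h : R) = 0)
    (u : R) (Mop : PDO R d)
    (W : PDO R d) (hW1 : W.coeff 1 = (h : R)) (hW2 : ∀ k : ℤ, 1 < k → W.coeff k = 0)
    (hW3 : W * W = PDO.Lop h u)
    (Lt LG : EPDO R d)
    (hLt : Lt = EPDO.lift (PDO.Lop h u)
        - EPDO.eps * EPDO.lift (PDO.pos (PDO.comm (PDO.Lop h u) Mop)))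
    (hLG : LG = EPDO.lift (PDO.Lop h u)
        + EPDO.eps * EPDO.lift (PDO.negp (PDO.comm (PDO.Lop h u) Mop))) :
    (∃! S : EPDO R d, S.re = W ∧ S * S = Lt) ∧
    (∃! S : EPDO R d, S.re = W ∧ S * S = LG) ∧
    (∀ St Sg : EPDO R d, St.re = W → St * St = Lt → Sg.re = W → Sg * Sg = LG →
      Sg = St + EPDO.eps * EPDO.lift (PDO.comm W Mop) ∧
      ∀ n : ℕ,
        Sg ^ (2 * n + 1)
          = St ^ (2 * n + 1) + EPDO.eps * EPDO.lift (PDO.comm (W ^ (2 * n + 1)) Mop) ∧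
        EPDO.enegp (Sg ^ (2 * n + 1))
          = EPDO.enegp (St ^ (2 * n + 1)
              + EPDO.eps * EPDO.lift (PDO.comm (W ^ (2 * n + 1)) Mop))) :=
  deformed_square_roots_relation_general R d hd h u Mop W hW1 hW2 hW3 Lt LG hLt hLG
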